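/- For complete homogeneous symmetric polynomials in K variables out of a window of a sequence: if x_1 = x_{2K-1} (the first variable of the first window equals the last variable of the last window), then the K×K matrix A with A_{mn} = h_{m-1}(x_n, ..., x_{n+K-1}) has determinant zero. -/

import Mathlib

/-!
Splitting off one variable gives `h_{d+1}(y) = y_i h_d(y) + h_{d+1}(y without y_i)`. Applied to the
first and the last variable of a window of width `W + 1`, it shows that the difference of the
`h_{d+1}` of two consecutive windows of width `W` is `(x_{n+W+1} - x_{n+1}) h_d` of the wider
window. Subtracting from every column of the matrix its left neighbour therefore leaves the row
`(1, 0, …, 0)` on top, and expanding along it trades an `S × S` window matrix of width `W` for an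
`(S-1) × (S-1)` one of width `W + 1` times the factors `x_{n+W+1} - x_{n+1}`. The index `S + W - 1`
of the last variable of the last window is invariant under this step, and once the matrix is
`2 × 2` the factor with `n = 0` is `x_{S+W-1} - x_1 = 0`.
-/

noncomputable def hpoly {R : Type*} [CommRing R] {K : ℕ} (y : Fin K → R) (d : ℕ) : R :=
  ∑ s : Sym (Fin K) d, ((s : Multiset (Fin K)).map y).prod

/-- Columns are indexed from `0`: the paper's window `x_{n+1}, …, x_{n+K}` is `window x K n`. -/
def window {α : Type*} (x : ℕ → α) (W n : ℕ) : Fin W → α := fun r => x (n + 1 + r)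

theorem window_succ_comp_succ {α : Type*} (x : ℕ → α) (W n : ℕ) :
    window x (W + 1) n ∘ Fin.succ = window x W (n + 1) := by
  ext r
  simp only [window, Function.comp_apply, Fin.val_succ]
  congr 1
  omega

theorem window_succ_comp_castSucc {α : Type*} (x : ℕ → α) (W n : ℕ) :
    window x (W + 1) n ∘ Fin.castSucc = window x W n := rfl

section

variable {R : Type*} [CommRing R]

theorem Sym.sum_prod_map_option_succ {α : Type*} [Fintype α] [DecidableEq α]
    (f : Option α → R) (d : ℕ) :
    ∑ s : Sym (Option α) (d + 1), ((s : Multiset (Option α)).map f).prod =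
      f none * ∑ s : Sym (Option α) d, ((s : Multiset (Option α)).map f).prod +
        ∑ s : Sym α (d + 1), ((s : Multiset α).map (f ∘ some)).prod := by
  rw [← Equiv.sum_comp (symOptionSuccEquiv (α := α) (n := d)).symm, Fintype.sum_sum_type,
    Finset.mul_sum]
  simp [symOptionSuccEquiv, Multiset.map_map, Sym.coe_cons]

theorem Sym.sum_prod_map_equiv {α β : Type*} [Fintype α] [Fintype β] [DecidableEq α]
    [DecidableEq β] (e : α ≃ β) (f : β → R) (d : ℕ) :
    ∑ s : Sym β d, ((s : Multiset β).map f).prod =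
      ∑ s : Sym α d, ((s : Multiset α).map (f ∘ e)).prod := by
  rw [← (Sym.equivCongr e).sum_comp]
  simp [Sym.equivCongr, Multiset.map_map]

theorem hpoly_zero {K : ℕ} (y : Fin K → R) : hpoly y 0 = 1 := by
  simp [hpoly, Sym.eq_nil_of_card_zero]

theorem hpoly_succ {K : ℕ} (y : Fin (K + 1) → R) (i : Fin (K + 1)) (d : ℕ) :
    hpoly y (d + 1) = y i * hpoly y d + hpoly (y ∘ i.succAbove) (d + 1) := by
  simp only [hpoly, Sym.sum_prod_map_equiv (finSuccEquiv' i).symm, Sym.sum_prod_map_option_succ,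
    Function.comp_apply, finSuccEquiv'_symm_none]
  rfl

theorem hpoly_comp_succ_sub_hpoly_comp_castSucc {K : ℕ} (y : Fin (K + 2) → R) (d : ℕ) :
    hpoly (y ∘ Fin.succ) (d + 1) - hpoly (y ∘ Fin.castSucc) (d + 1) =
      (y (Fin.last _) - y 0) * hpoly y d := by
  have h₀ := hpoly_succ y 0 d
  have hₗ := hpoly_succ y (Fin.last _) d
  rw [Fin.succAbove_zero] at h₀
  rw [Fin.succAbove_last] at hₗ
  linear_combination hₗ - h₀

theorem hpoly_window_succ_sub_hpoly_window (x : ℕ → R) (W n d : ℕ) :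
    hpoly (window x (W + 1) (n + 1)) (d + 1) - hpoly (window x (W + 1) n) (d + 1) =
      (x (n + 1 + (W + 1)) - x (n + 1)) * hpoly (window x (W + 2) n) d := by
  rw [← window_succ_comp_succ, ← window_succ_comp_castSucc x (W + 1),
    hpoly_comp_succ_sub_hpoly_comp_castSucc]
  simp [window]

theorem Matrix.det_eq_mul_det_submatrix_of_row_zero {n : ℕ}
    (A : Matrix (Fin (n + 1)) (Fin (n + 1)) R) (h : ∀ j : Fin n, A 0 j.succ = 0) :
    A.det = A 0 0 * (A.submatrix Fin.succ Fin.succ).det := by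
  simp [Matrix.det_succ_row_zero A, Fin.sum_univ_succ, h]

noncomputable def windowMatrix (W S : ℕ) (x : ℕ → R) : Matrix (Fin S) (Fin S) R :=
  Matrix.of fun m n => hpoly (window x W n) m

theorem det_windowMatrix_succ (W S : ℕ) (x : ℕ → R) :
    (windowMatrix (W + 1) (S + 1) x).det =
      (windowMatrix (W + 2) S x).det * ∏ n : Fin S, (x (n + 1 + (W + 1)) - x (n + 1)) := by
  set A := windowMatrix (W + 1) (S + 1) x
  let B : Matrix (Fin (S + 1)) (Fin (S + 1)) R :=
    Matrix.of fun m n => Fin.cases (A m 0) (fun j => A m j.succ - A m j.castSucc) n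
  have hAB : A.det = B.det :=
    Matrix.det_eq_of_forall_col_eq_smul_add_pred (fun _ => 1) (fun _ => rfl)
      (fun i j => by simp [B])
  have hA₀ : ∀ n, A 0 n = 1 := fun n => hpoly_zero _
  have hB : B.submatrix Fin.succ Fin.succ = windowMatrix (W + 2) S x *
      Matrix.diagonal fun n : Fin S => x (n + 1 + (W + 1)) - x (n + 1) := by
    ext m n
    simp [B, A, windowMatrix, Matrix.mul_diagonal, hpoly_window_succ_sub_hpoly_window, mul_comm]
  rw [hAB, Matrix.det_eq_mul_det_submatrix_of_row_zero B (fun j => by simp [B, hA₀]), hB,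
    Matrix.det_mul, Matrix.det_diagonal]
  simp [B, hA₀]

theorem det_windowMatrix_eq_zero (x : ℕ → R) :
    ∀ S W : ℕ, x (S + W + 2) = x 1 → (windowMatrix (W + 1) (S + 2) x).det = 0
  | 0, W, hx => by
    rw [det_windowMatrix_succ, Fin.prod_univ_one, Fin.val_zero,
      show 0 + 1 + (W + 1) = 0 + W + 2 by omega, hx, sub_self, mul_zero]
  | S + 1, W, hx => by
    rw [det_windowMatrix_succ, det_windowMatrix_eq_zero x S (W + 1) (by rw [← hx]; ring_nf),
      zero_mul]

end

/-- If the first variable of the first window equals the last variable of the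
last window, `x (2K-1) = x 1`, then the `K×K` matrix
`A m n = h_{m-1}(x n, …, x (n+K-1))` has determinant zero. -/
theorem det_hpoly_window_eq_zero {R : Type*} [CommRing R] (K : ℕ) (hK : 2 ≤ K)
    (x : ℕ → R) (hx : x (2 * K - 1) = x 1) :
    Matrix.det (Matrix.of fun m n : Fin K =>
        hpoly (fun r : Fin K => x ((n : ℕ) + 1 + (r : ℕ))) (m : ℕ)) = 0 := by
  obtain ⟨S, rfl⟩ : ∃ S, K = S + 2 := ⟨K - 2, by omega⟩
  show (windowMatrix (S + 2) (S + 2) x).det = 0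
  exact det_windowMatrix_eq_zero x S (S + 1) (by rw [← hx]; congr 1; omega)
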